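/- arXiv:1709.07364 — 3 statements merged into one kernel-verified Lean document; each statement's English description precedes it below -/
import Mathlib

section
/- Let X be a topological space, B a basis of opens, K a category admitting projective limits, and F a presheaf on B with values in K. Then the induced presheaf F' on X (defined by F'(U) = lim_{V ∈ B, V ⊆ U} F(V)) is a sheaf if and only if F satisfies the basis sheaf condition (F₀): for every U ∈ B, every cover of U by basic opens U_α ∈ B contained in U, and every object T of K, composition with the restrictions gives a bijection between Hom_K(T, F(U)) and the set of families (f_α) ∈ ∏ Hom_K(T, F(U_α)) satisfying ρ_V^{U_α} ∘ f_α = ρ_V^{U_β} ∘ f_β for every pair (α, β) and every V ∈ B with V ⊆ U_α ∩ U_β. -/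
open CategoryTheory CategoryTheory.Limits TopologicalSpace Opposite

universe u v w

/-- The sheaf axiom (F). -/
def IsSheafF {X : Type u} [TopologicalSpace X] {K : Type w} [Category.{v} K]
    (F : (Opens X)ᵒᵖ ⥤ K) : Prop :=
  ∀ ⦃ι : Type u⦄ (Uα : ι → Opens X) (T : K),
    (∀ f g : T ⟶ F.obj (op (iSup Uα)),
      (∀ i, f ≫ F.map (homOfLE (le_iSup Uα i)).op =
            g ≫ F.map (homOfLE (le_iSup Uα i)).op) → f = g) ∧
    (∀ fα : ∀ i, T ⟶ F.obj (op (Uα i)),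
      (∀ i j, fα i ≫ F.map (homOfLE (inf_le_left : Uα i ⊓ Uα j ≤ Uα i)).op =
              fα j ≫ F.map (homOfLE (inf_le_right : Uα i ⊓ Uα j ≤ Uα j)).op) →
      ∃ f : T ⟶ F.obj (op (iSup Uα)),
        ∀ i, f ≫ F.map (homOfLE (le_iSup Uα i)).op = fα i)
variable {X : Type u} [TopologicalSpace X] {K : Type w} [Category.{v} K]

/-- The (basic) opens belonging to `ℬ` that are contained in `U`. -/
def BasisLe (ℬ : Set (Opens X)) (U : Opens X) : Type u := {V : ↥ℬ // (V : Opens X) ≤ U}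

instance (ℬ : Set (Opens X)) (U : Opens X) : Preorder (BasisLe ℬ U) :=
  Subtype.preorder _

/-- Inclusion of the basic opens contained in `U` into the basic opens. -/
def basisLeIncl (ℬ : Set (Opens X)) (U : Opens X) : BasisLe ℬ U ⥤ ↥ℬ :=
  Monotone.functor (f := fun V => V.1) fun _ _ h => h

/-- The diagram of values of a presheaf on a basis over the basic opens contained
in `U`. -/
def basisDiagram (ℬ : Set (Opens X)) (F : (↥ℬ)ᵒᵖ ⥤ K) (U : Opens X) :
    (BasisLe ℬ U)ᵒᵖ ⥤ K :=
  (basisLeIncl ℬ U).op ⋙ F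

/-- For `U' ≤ U`, basic opens contained in `U'` are contained in `U`. -/
def basisLeMap (ℬ : Set (Opens X)) {U' U : Opens X} (h : U' ≤ U) :
    BasisLe ℬ U' ⥤ BasisLe ℬ U :=
  Monotone.functor (f := fun V => ⟨V.1, V.2.trans h⟩) fun _ _ hab => hab

variable [HasLimitsOfSize.{u, u} K]

/-- The presheaf on `X` induced by a presheaf on a basis:
`F'(U) = lim_{V ∈ ℬ, V ⊆ U} F(V)`. -/
noncomputable def inducedPresheaf (ℬ : Set (Opens X)) (F : (↥ℬ)ᵒᵖ ⥤ K) : (Opens X)ᵒᵖ ⥤ K where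
  obj U := limit (basisDiagram ℬ F U.unop)
  map {U V} i := limit.pre (basisDiagram ℬ F U.unop) (basisLeMap ℬ i.unop.le).op
  map_id U := by
    apply limit.hom_ext
    intro j
    exact (limit.pre_π _ _ _).trans (Category.id_comp _).symm
  map_comp {U V W} i j := by
    apply limit.hom_ext
    intro k
    refine (limit.pre_π _ _ _).trans (Eq.symm ((Category.assoc _ _ _).trans ?_))
    refine (congrArg
        (fun t => limit.pre (basisDiagram ℬ F (unop U)) (basisLeMap ℬ i.unop.le).op ≫ t)
        (limit.pre_π (basisDiagram ℬ F (unop V)) (basisLeMap ℬ j.unop.le).op k)).trans ?_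
    exact limit.pre_π _ _ _

/-- The sheaf axiom (F₀) for a presheaf on a basis of opens. -/
def IsSheafF₀ (ℬ : Set (Opens X)) (F : (↥ℬ)ᵒᵖ ⥤ K) : Prop :=
  ∀ (U : ↥ℬ) ⦃ι : Type u⦄ (Uα : ι → ↥ℬ) (hle : ∀ i, (Uα i : Opens X) ≤ (U : Opens X)),
    (U : Opens X) ≤ (⨆ i, (Uα i : Opens X)) → ∀ T : K,
    (∀ f g : T ⟶ F.obj (op U),
      (∀ i, f ≫ F.map (homOfLE (hle i)).op = g ≫ F.map (homOfLE (hle i)).op) → f = g) ∧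
    (∀ fα : ∀ i, T ⟶ F.obj (op (Uα i)),
      (∀ (i j) (V : ↥ℬ) (h1 : (V : Opens X) ≤ (Uα i : Opens X))
         (h2 : (V : Opens X) ≤ (Uα j : Opens X)),
        fα i ≫ F.map (homOfLE h1).op = fα j ≫ F.map (homOfLE h2).op) →
      ∃ f : T ⟶ F.obj (op U), ∀ i, f ≫ F.map (homOfLE (hle i)).op = fα i)

/-!
For a basic open `V`, the map `F(V) ⟶ F'(V)` into the limit is split by the projection to `V`
itself, so the sheaf condition for `F'` on covers of basic opens by basic opens yields (F₀).
Conversely, a morphism into `F'(U)` is a compatible family over the basic opens inside `U`.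
Given a cover of `U`, every basic `V ⊆ U` is covered by the basic opens inside `V` that are
subordinate to the cover, so by (F₀) such a family is determined by, and can be glued from,
its values on subordinate basic opens.
-/

section BasisRestriction

variable {C : Type*} [Category C] {ℬ : Set (Opens X)} (F : (↥ℬ)ᵒᵖ ⥤ C)

lemma map_homOfLE_comp {V W Z : ↥ℬ} (h : (W : Opens X) ≤ V) (h' : (Z : Opens X) ≤ W) :
    F.map (homOfLE h).op ≫ F.map (homOfLE h').op = F.map (homOfLE (h'.trans h)).op :=
  (F.map_comp _ _).symm

lemma map_homOfLE_self (V : ↥ℬ) : F.map (homOfLE (le_refl (V : Opens X))).op = 𝟙 _ :=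
  F.map_id _

end BasisRestriction

namespace inducedPresheaf

variable {ℬ : Set (Opens X)} {F : (↥ℬ)ᵒᵖ ⥤ K} {T : K}

variable (F) in
noncomputable def π (U : Opens X) (W : ↥ℬ) (hW : (W : Opens X) ≤ U) :
    (inducedPresheaf ℬ F).obj (op U) ⟶ F.obj (op W) :=
  limit.π (basisDiagram ℬ F U) (op ⟨W, hW⟩)

lemma π_map {U : Opens X} {W W' : ↥ℬ} (hW : (W : Opens X) ≤ U) (hW' : (W' : Opens X) ≤ U)
    (h : (W' : Opens X) ≤ W) : π F U W hW ≫ F.map (homOfLE h).op = π F U W' hW' :=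
  limit.w (basisDiagram ℬ F U) (homOfLE (show (⟨W', hW'⟩ : BasisLe ℬ U) ≤ ⟨W, hW⟩ from h)).op

lemma map_π {U' U : Opens X} (h : U' ≤ U) {W : ↥ℬ} (hW : (W : Opens X) ≤ U') :
    (inducedPresheaf ℬ F).map (homOfLE h).op ≫ π F U' W hW = π F U W (hW.trans h) :=
  limit.pre_π _ _ _

lemma hom_ext {U : Opens X} {f g : T ⟶ (inducedPresheaf ℬ F).obj (op U)}
    (h : ∀ W hW, f ≫ π F U W hW = g ≫ π F U W hW) : f = g :=
  limit.hom_ext fun W => h W.unop.1 W.unop.2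

noncomputable def lift {U : Opens X} (s : ∀ W : ↥ℬ, (W : Opens X) ≤ U → (T ⟶ F.obj (op W)))
    (hs : ∀ (W W' : ↥ℬ) hW hW' (h : (W' : Opens X) ≤ W),
      s W hW ≫ F.map (homOfLE h).op = s W' hW') :
    T ⟶ (inducedPresheaf ℬ F).obj (op U) :=
  limit.lift (basisDiagram ℬ F U)
    { pt := T
      π := { app := fun W => s W.unop.1 W.unop.2
             naturality := fun _ _ m =>
              (Category.id_comp _).trans (hs _ _ _ _ (leOfHom m.unop)).symm } }

lemma lift_π {U : Opens X} (s : ∀ W : ↥ℬ, (W : Opens X) ≤ U → (T ⟶ F.obj (op W)))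
    (hs : ∀ (W W' : ↥ℬ) hW hW' (h : (W' : Opens X) ≤ W),
      s W hW ≫ F.map (homOfLE h).op = s W' hW')
    (W : ↥ℬ) (hW : (W : Opens X) ≤ U) : lift s hs ≫ π F U W hW = s W hW :=
  limit.lift_π _ _

noncomputable def ofBasic (V : ↥ℬ) : F.obj (op V) ⟶ (inducedPresheaf ℬ F).obj (op V.1) :=
  lift (fun _ hW => F.map (homOfLE hW).op) fun _ _ _ _ h => map_homOfLE_comp F _ h

lemma ofBasic_π (V W : ↥ℬ) (hW : (W : Opens X) ≤ V) :
    ofBasic V ≫ π F V W hW = F.map (homOfLE hW).op :=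
  lift_π _ _ W hW

lemma ofBasic_π_self (V : ↥ℬ) : ofBasic V ≫ π F V V le_rfl = 𝟙 _ :=
  (ofBasic_π V V le_rfl).trans (F.map_id _)

instance (V : ↥ℬ) : IsSplitMono (ofBasic (F := F) V) :=
  IsSplitMono.mk' ⟨_, ofBasic_π_self V⟩

lemma ofBasic_map {V V' : ↥ℬ} (h : (V' : Opens X) ≤ V) :
    ofBasic V ≫ (inducedPresheaf ℬ F).map (homOfLE h).op = F.map (homOfLE h).op ≫ ofBasic V' :=
  hom_ext fun W hW => by
    rw [Category.assoc, Category.assoc, map_π, ofBasic_π, ofBasic_π, map_homOfLE_comp]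

end inducedPresheaf

section Sheaf

variable {C : Type*} [Category C] {G : (Opens X)ᵒᵖ ⥤ C} {ι : Type u} {Uα : ι → Opens X}
  {U : Opens X} {T : C}

lemma IsSheafF.hom_ext (hG : IsSheafF G) (hle : ∀ i, Uα i ≤ U) (hU : U ≤ iSup Uα)
    {f g : T ⟶ G.obj (op U)}
    (h : ∀ i, f ≫ G.map (homOfLE (hle i)).op = g ≫ G.map (homOfLE (hle i)).op) : f = g := by
  obtain rfl := le_antisymm (iSup_le hle) hU
  exact (hG Uα T).1 f g h

lemma IsSheafF.exists_glue (hG : IsSheafF G) (hle : ∀ i, Uα i ≤ U) (hU : U ≤ iSup Uα)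
    (fα : ∀ i, T ⟶ G.obj (op (Uα i)))
    (hfα : ∀ i j, fα i ≫ G.map (homOfLE (inf_le_left : Uα i ⊓ Uα j ≤ Uα i)).op =
      fα j ≫ G.map (homOfLE (inf_le_right : Uα i ⊓ Uα j ≤ Uα j)).op) :
    ∃ f : T ⟶ G.obj (op U), ∀ i, f ≫ G.map (homOfLE (hle i)).op = fα i := by
  obtain rfl := le_antisymm (iSup_le hle) hU
  exact (hG Uα T).2 fα hfα

end Sheaf

def Subordinate (ℬ : Set (Opens X)) (V : Opens X) {ι : Sort*} (Uα : ι → Opens X) : Type u :=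
  {W : ↥ℬ // (W : Opens X) ≤ V ∧ ∃ i, (W : Opens X) ≤ Uα i}

lemma le_iSup_subordinate {ℬ : Set (Opens X)} (hB : Opens.IsBasis ℬ) {V : Opens X} {ι : Sort*}
    {Uα : ι → Opens X} (hV : V ≤ iSup Uα) :
    V ≤ ⨆ W : Subordinate ℬ V Uα, (W.1 : Opens X) := by
  intro x hx
  obtain ⟨i, hi⟩ := Opens.mem_iSup.mp (hV hx)
  obtain ⟨W, hWB, hxW, hWle⟩ := Opens.isBasis_iff_nbhd.mp hB (show x ∈ V ⊓ Uα i from ⟨hx, hi⟩)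
  exact Opens.mem_iSup.mpr ⟨⟨⟨W, hWB⟩, hWle.trans inf_le_left, i, hWle.trans inf_le_right⟩, hxW⟩

namespace IsSheafF₀

open inducedPresheaf

section

variable {C : Type*} [Category C] {ℬ : Set (Opens X)} {F : (↥ℬ)ᵒᵖ ⥤ C}
  (hF : IsSheafF₀ ℬ F) (hB : Opens.IsBasis ℬ) {ι : Sort*} {Uα : ι → Opens X} {T : C}
include hF hB

lemma hom_ext_of_subordinate {V : ↥ℬ} (hV : (V : Opens X) ≤ iSup Uα) {f g : T ⟶ F.obj (op V)}
    (h : ∀ (W : ↥ℬ) (hWV : (W : Opens X) ≤ V) (i : ι), (W : Opens X) ≤ Uα i →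
      f ≫ F.map (homOfLE hWV).op = g ≫ F.map (homOfLE hWV).op) : f = g :=
  (hF V (fun W : Subordinate ℬ V Uα => W.1) (fun W => W.2.1) (le_iSup_subordinate hB hV) T).1
    f g fun W => h W.1 W.2.1 W.2.2.choose W.2.2.choose_spec

lemma exists_glue_of_subordinate {V : ↥ℬ} (hV : (V : Opens X) ≤ iSup Uα)
    (s : ∀ (W : ↥ℬ) (i : ι), (W : Opens X) ≤ Uα i → (T ⟶ F.obj (op W)))
    (hs : ∀ (W W' : ↥ℬ) i j hW hW' (h : (W' : Opens X) ≤ W),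
      s W i hW ≫ F.map (homOfLE h).op = s W' j hW') :
    ∃ g : T ⟶ F.obj (op V), ∀ (W : ↥ℬ) (hWV : (W : Opens X) ≤ V) i hWi,
      g ≫ F.map (homOfLE hWV).op = s W i hWi := by
  have s_indep : ∀ (W : ↥ℬ) i j (hi : (W : Opens X) ≤ Uα i) (hj : (W : Opens X) ≤ Uα j),
      s W i hi = s W j hj := fun W i j hi hj => by
    rw [← hs W W i j hi hj le_rfl, map_homOfLE_self, Category.comp_id]
  obtain ⟨g, hg⟩ := (hF V (fun W : Subordinate ℬ V Uα => W.1) (fun W => W.2.1)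
    (le_iSup_subordinate hB hV) T).2 (fun W => s W.1 W.2.2.choose W.2.2.choose_spec)
    fun W₁ W₂ Z h₁ h₂ => (hs _ Z _ _ _ (h₁.trans W₁.2.2.choose_spec) h₁).trans
      (hs _ Z _ _ _ (h₁.trans W₁.2.2.choose_spec) h₂).symm
  exact ⟨g, fun W hWV i hWi => (hg ⟨W, hWV, i, hWi⟩).trans (s_indep _ _ _ _ _)⟩

end

section

variable {ℬ : Set (Opens X)} {F : (↥ℬ)ᵒᵖ ⥤ K} (hF : IsSheafF₀ ℬ F) (hB : Opens.IsBasis ℬ)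
include hF hB

lemma inducedPresheaf_hom_ext {ι : Sort*} {Uα : ι → Opens X} {T : K}
    {f g : T ⟶ (inducedPresheaf ℬ F).obj (op (iSup Uα))}
    (h : ∀ (W : ↥ℬ) i (hWi : (W : Opens X) ≤ Uα i),
      f ≫ π F _ W (hWi.trans (le_iSup Uα i)) = g ≫ π F _ W (hWi.trans (le_iSup Uα i))) :
    f = g :=
  hom_ext fun V hV => hF.hom_ext_of_subordinate hB hV fun W hWV i hWi => by
    rw [Category.assoc, Category.assoc, π_map hV (hWV.trans hV), h W i hWi]

lemma exists_inducedPresheaf_lift {ι : Sort*} {Uα : ι → Opens X} {T : K}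
    (s : ∀ (W : ↥ℬ) (i : ι), (W : Opens X) ≤ Uα i → (T ⟶ F.obj (op W)))
    (hs : ∀ (W W' : ↥ℬ) i j hW hW' (h : (W' : Opens X) ≤ W),
      s W i hW ≫ F.map (homOfLE h).op = s W' j hW') :
    ∃ f : T ⟶ (inducedPresheaf ℬ F).obj (op (iSup Uα)), ∀ (W : ↥ℬ) i hWi,
      f ≫ π F _ W (hWi.trans (le_iSup Uα i)) = s W i hWi := by
  choose g hg using fun (V : ↥ℬ) (hV : (V : Opens X) ≤ iSup Uα) =>
    hF.exists_glue_of_subordinate hB hV s hs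
  refine ⟨lift g fun V V' hV hV' h => hF.hom_ext_of_subordinate hB hV' fun W hWV' i hWi => ?_,
    fun W i hWi => ?_⟩
  · rw [Category.assoc, map_homOfLE_comp, hg V hV W (hWV'.trans h) i hWi, hg V' hV' W hWV' i hWi]
  · rw [lift_π, ← hg W _ W le_rfl i hWi, map_homOfLE_self, Category.comp_id]

lemma isSheafF_inducedPresheaf : IsSheafF (inducedPresheaf ℬ F) := by
  intro ι Uα T
  refine ⟨fun f g hfg => hF.inducedPresheaf_hom_ext hB fun W i hWi => ?_, fun fα hfα => ?_⟩
  · rw [← map_π (le_iSup Uα i) hWi, reassoc_of% hfg i]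
  · obtain ⟨f, hf⟩ := hF.exists_inducedPresheaf_lift hB
      (fun W i hWi => fα i ≫ π F (Uα i) W hWi) fun W W' i j hW hW' h => by
        have := congrArg (· ≫ π F _ W' (le_inf (h.trans hW) hW')) (hfα i j)
        simp only [Category.assoc, map_π] at this
        rw [Category.assoc, π_map _ (h.trans hW), this]
    exact ⟨f, fun i => hom_ext fun W hW => by rw [Category.assoc, map_π, hf]⟩

end

end IsSheafF₀

open inducedPresheaf in
lemma isSheafF₀_of_isSheafF_inducedPresheaf {ℬ : Set (Opens X)} {F : (↥ℬ)ᵒᵖ ⥤ K}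
    (hF : IsSheafF (inducedPresheaf ℬ F)) : IsSheafF₀ ℬ F := by
  intro U ι Uα hle hcov T
  refine ⟨fun f g hfg => ?_, fun fα hfα => ?_⟩
  · rw [← cancel_mono (ofBasic U)]
    refine hF.hom_ext (Uα := fun i => (Uα i : Opens X)) hle hcov fun i => ?_
    rw [Category.assoc, Category.assoc, ofBasic_map, reassoc_of% hfg i]
  · obtain ⟨f, hf⟩ := hF.exists_glue (Uα := fun i => (Uα i : Opens X)) hle hcov
      (fun i => fα i ≫ ofBasic (Uα i)) fun i j => hom_ext fun W hW => by
        simp only [Category.assoc, map_π, ofBasic_π]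
        exact hfα i j W _ _
    refine ⟨f ≫ π F U U le_rfl, fun i => ?_⟩
    rw [Category.assoc, π_map le_rfl (hle i) (hle i), ← map_π (hle i) le_rfl,
      reassoc_of% hf i, ofBasic_π_self, Category.comp_id]

/-- The induced presheaf `F'` is a sheaf iff the presheaf `F` on the basis
satisfies the condition (F₀). -/
theorem inducedPresheaf_isSheaf_iff (ℬ : Set (Opens X)) (hB : Opens.IsBasis ℬ)
    (F : (↥ℬ)ᵒᵖ ⥤ K) :
    IsSheafF (inducedPresheaf ℬ F) ↔ IsSheafF₀ ℬ F :=
  ⟨isSheafF₀_of_isSheafF_inducedPresheaf, fun hF => hF.isSheafF_inducedPresheaf hB⟩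
end

section
/- In the setting of gluing sheaves: given sheaves F_λ, G_λ on the members U_λ of an open cover of X with gluing isomorphisms θ_{λμ}, ω_{λμ} respectively satisfying the cocycle conditions, and letting F, G be the glued sheaves with identifications η_λ : F|_{U_λ} ≅ F_λ and ζ_λ : G|_{U_λ} ≅ G_λ, the map u ↦ (ζ_λ ∘ u|_{U_λ} ∘ η_λ⁻¹) is a bijection between Hom(F, G) and the set of families (u_λ) ∈ ∏_λ Hom(F_λ, G_λ) satisfying ω_{λμ} ∘ u_μ = u_λ ∘ θ_{λμ} on U_λ ∩ U_μ for every pair (λ, μ). -/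
open CategoryTheory CategoryTheory.Limits TopologicalSpace Opposite

universe u v w

variable {X : Type u} [TopologicalSpace X] {K : Type w} [Category.{v} K]

/-- The opens of `X` contained in `U`; a model for the opens of the subspace `U`. -/
def OpensLe (U : Opens X) : Type u := {W : Opens X // W ≤ U}

instance (U : Opens X) : Preorder (OpensLe U) := Subtype.preorder _

/-- For `V ≤ U`, opens contained in `V` are contained in `U`. -/
def leFunctor {V U : Opens X} (h : V ≤ U) : OpensLe V ⥤ OpensLe U :=
  Monotone.functor (f := fun W => ⟨W.1, W.2.trans h⟩) fun _ _ hab => hab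

/-- Restriction of a presheaf on (the subspace) `U` to (the subspace) `V ≤ U`. -/
def resF {V U : Opens X} (h : V ≤ U) (F : (OpensLe U)ᵒᵖ ⥤ K) : (OpensLe V)ᵒᵖ ⥤ K :=
  (leFunctor h).op ⋙ F

/-- Restriction of a morphism of presheaves on `U` to `V ≤ U`. -/
def resNat {V U : Opens X} (h : V ≤ U) {F G : (OpensLe U)ᵒᵖ ⥤ K} (t : F ⟶ G) :
    resF h F ⟶ resF h G :=
  Functor.whiskerLeft (leFunctor h).op t

/-- Restriction of an isomorphism of presheaves on `U` to `V ≤ U`. -/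
def resIso {V U : Opens X} (h : V ≤ U) {F G : (OpensLe U)ᵒᵖ ⥤ K} (t : F ≅ G) :
    resF h F ≅ resF h G :=
  Functor.isoWhiskerLeft (leFunctor h).op t

/-- Restriction of a presheaf on `X` to (the subspace) `U`. -/
def resX (U : Opens X) (G : (Opens X)ᵒᵖ ⥤ K) : (OpensLe U)ᵒᵖ ⥤ K :=
  ((Monotone.functor (f := fun W : OpensLe U => W.1) fun _ _ h => h : OpensLe U ⥤ Opens X)).op ⋙ G

/-- Restriction of a morphism of presheaves on `X` to `U`. -/
def resXNat (U : Opens X) {F G : (Opens X)ᵒᵖ ⥤ K} (t : F ⟶ G) : resX U F ⟶ resX U G :=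
  Functor.whiskerLeft _ t

/-- Restriction of an isomorphism of presheaves on `X` to `U`. -/
def resXIso (U : Opens X) {F G : (Opens X)ᵒᵖ ⥤ K} (t : F ≅ G) : resX U F ≅ resX U G :=
  Functor.isoWhiskerLeft _ t

/-- The intersection of two opens contained in `U`, as an open contained in `U`. -/
def interLe {U : Opens X} (A B : OpensLe U) : OpensLe U :=
  ⟨A.1 ⊓ B.1, le_trans inf_le_left A.2⟩

lemma interLe_le_left {U : Opens X} (A B : OpensLe U) : interLe A B ≤ A :=
  show A.1 ⊓ B.1 ≤ A.1 from inf_le_left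

lemma interLe_le_right {U : Opens X} (A B : OpensLe U) : interLe A B ≤ B :=
  show A.1 ⊓ B.1 ≤ B.1 from inf_le_right

/-- The union of a family of opens contained in `U`, as an open contained in `U`. -/
def supLe {U : Opens X} {ι : Type u} (Wα : ι → OpensLe U) : OpensLe U :=
  ⟨⨆ i, (Wα i).1, iSup_le fun i => (Wα i).2⟩

lemma le_supLe {U : Opens X} {ι : Type u} (Wα : ι → OpensLe U) (i : ι) :
    Wα i ≤ supLe Wα :=
  show (Wα i).1 ≤ ⨆ i, (Wα i).1 from le_iSup (fun i => (Wα i).1) i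

/-- The sheaf axiom for a presheaf on (the opens contained in) `U`. -/
def IsSheafLe {U : Opens X} (F : (OpensLe U)ᵒᵖ ⥤ K) : Prop :=
  ∀ ⦃ι : Type u⦄ (Wα : ι → OpensLe U) (T : K),
    (∀ f g : T ⟶ F.obj (op (supLe Wα)),
      (∀ i, f ≫ F.map (homOfLE (le_supLe Wα i)).op =
            g ≫ F.map (homOfLE (le_supLe Wα i)).op) →
      f = g) ∧
    (∀ fα : ∀ i, T ⟶ F.obj (op (Wα i)),
      (∀ i j, fα i ≫ F.map (homOfLE (interLe_le_left (Wα i) (Wα j))).op =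
              fα j ≫ F.map (homOfLE (interLe_le_right (Wα i) (Wα j))).op) →
      ∃ f : T ⟶ F.obj (op (supLe Wα)),
        ∀ i, f ≫ F.map (homOfLE (le_supLe Wα i)).op = fα i)

/-!
Since `GG` is a sheaf, a morphism `FF ⟶ GG` is the same as a family of morphisms
`FF|U_l ⟶ GG|U_l` agreeing on the overlaps `U_l ∩ U_m`: its component on an open `V` is glued
from the components on the cover `V ∩ U_l`. Conjugating by `η_l` and `ζ_l` turns agreement on
overlaps into compatibility with `θ` and `ω`, because `θ_lm = η_l ∘ η_m⁻¹` and `ω_lm = ζ_l ∘ ζ_m⁻¹`.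
-/

theorem CategoryTheory.Iso.conj_comp_symm_trans_iff {C : Type*} [Category C]
    {A B A₁ A₂ B₁ B₂ : C} (a₁ : A ≅ A₁) (a₂ : A ≅ A₂) (b₁ : B ≅ B₁) (b₂ : B ≅ B₂) (t₁ t₂ : A ⟶ B) :
    (a₂.inv ≫ t₂ ≫ b₂.hom) ≫ (b₂.symm ≪≫ b₁).hom = (a₂.symm ≪≫ a₁).hom ≫ a₁.inv ≫ t₁ ≫ b₁.hom ↔
      t₂ = t₁ := by
  simp

/-- `t.app (op ⟨W, hW⟩)`, retyped: its own type is `F(W) ⟶ G(W)` only up to unfolding `resX`,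
which blocks rewriting. -/
def resXApp {U : Opens X} {F G : (Opens X)ᵒᵖ ⥤ K} (t : resX U F ⟶ resX U G) (W : Opens X)
    (hW : W ≤ U) : F.obj (op W) ⟶ G.obj (op W) :=
  t.app (op ⟨W, hW⟩)

lemma map_homOfLE_comp_s10 (P : (Opens X)ᵒᵖ ⥤ K) {A B C : Opens X} (h₁ : A ≤ B) (h₂ : B ≤ C) :
    P.map (homOfLE h₂).op ≫ P.map (homOfLE h₁).op = P.map (homOfLE (h₁.trans h₂)).op := by
  rw [← P.map_comp]
  rfl

lemma map_homOfLE_comp_assoc (P : (Opens X)ᵒᵖ ⥤ K) {A B C : Opens X} (h₁ : A ≤ B) (h₂ : B ≤ C)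
    {T : K} (f : P.obj (op A) ⟶ T) :
    P.map (homOfLE h₂).op ≫ P.map (homOfLE h₁).op ≫ f = P.map (homOfLE (h₁.trans h₂)).op ≫ f := by
  rw [← Category.assoc, map_homOfLE_comp_s10]

namespace IsSheafF

variable {G : (Opens X)ᵒᵖ ⥤ K}

theorem hom_ext_of_le_iSup (hG : IsSheafF G) {ι : Type u} {Uα : ι → Opens X} {V : Opens X}
    (hle : ∀ i, Uα i ≤ V) (hV : V ≤ ⨆ i, Uα i) {T : K} {f g : T ⟶ G.obj (op V)}
    (h : ∀ i, f ≫ G.map (homOfLE (hle i)).op = g ≫ G.map (homOfLE (hle i)).op) : f = g := by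
  obtain rfl : iSup Uα = V := le_antisymm (iSup_le hle) hV
  exact (hG Uα T).1 f g h

theorem exists_of_le_iSup (hG : IsSheafF G) {ι : Type u} {Uα : ι → Opens X} {V : Opens X}
    (hle : ∀ i, Uα i ≤ V) (hV : V ≤ ⨆ i, Uα i) {T : K} (fα : ∀ i, T ⟶ G.obj (op (Uα i)))
    (hfα : ∀ i j, fα i ≫ G.map (homOfLE (inf_le_left : Uα i ⊓ Uα j ≤ Uα i)).op =
      fα j ≫ G.map (homOfLE (inf_le_right : Uα i ⊓ Uα j ≤ Uα j)).op) :
    ∃ f : T ⟶ G.obj (op V), ∀ i, f ≫ G.map (homOfLE (hle i)).op = fα i := by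
  obtain rfl : iSup Uα = V := le_antisymm (iSup_le hle) hV
  exact (hG Uα T).2 fα hfα

end IsSheafF

lemma le_iSup_inf_of_iSup_eq_top {L : Type*} {U : L → Opens X} (hcov : ⨆ l, U l = ⊤)
    (V : Opens X) : V ≤ ⨆ l, V ⊓ U l := by
  rw [← inf_iSup_eq, hcov, inf_top_eq]

section resXApp

variable {U : Opens X} {F G : (Opens X)ᵒᵖ ⥤ K} (t : resX U F ⟶ resX U G)

lemma resXApp_naturality {V W : Opens X} (hV : V ≤ U) (hW : W ≤ U) (h : W ≤ V) :
    F.map (homOfLE h).op ≫ resXApp t W hW = resXApp t V hV ≫ G.map (homOfLE h).op :=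
  t.naturality (homOfLE (show (⟨W, hW⟩ : OpensLe U) ≤ ⟨V, hV⟩ from h)).op

lemma map_resXApp_map {V W W' : Opens X} (hW : W ≤ U) (hW' : W' ≤ U) (hWV : W ≤ V)
    (h : W' ≤ W) :
    (F.map (homOfLE hWV).op ≫ resXApp t W hW) ≫ G.map (homOfLE h).op =
      F.map (homOfLE (h.trans hWV)).op ≫ resXApp t W' hW' := by
  rw [Category.assoc, ← resXApp_naturality t hW hW' h, map_homOfLE_comp_assoc]

end resXApp

section Glue

variable {L : Type u} {U : L → Opens X} {F G : (Opens X)ᵒᵖ ⥤ K}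

theorem resXApp_eq_of_resNat_eq {v : ∀ l, resX (U l) F ⟶ resX (U l) G}
    (hv : ∀ l m, resNat (inf_le_right : U l ⊓ U m ≤ U m) (v m) =
      resNat (inf_le_left : U l ⊓ U m ≤ U l) (v l))
    {l m : L} {W : Opens X} (hl : W ≤ U l) (hm : W ≤ U m) :
    resXApp (v l) W hl = resXApp (v m) W hm :=
  (congr_app (hv l m) (op ⟨W, le_inf hl hm⟩)).symm

theorem hom_ext_of_resXNat_eq (hcov : ⨆ l, U l = ⊤) (hG : IsSheafF G) {u u' : F ⟶ G}
    (h : ∀ l, resXNat (U l) u = resXNat (U l) u') : u = u' := by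
  ext V
  refine hG.hom_ext_of_le_iSup (fun l => inf_le_left) (le_iSup_inf_of_iSup_eq_top hcov V.unop)
    fun l => ?_
  have hl := congr_app (h l) (op ⟨V.unop ⊓ U l, inf_le_right⟩)
  rw [← u.naturality, ← u'.naturality]
  exact congrArg _ hl

theorem exists_resXApp_glue (hcov : ⨆ l, U l = ⊤) (hG : IsSheafF G)
    (v : ∀ l, resX (U l) F ⟶ resX (U l) G)
    (hv : ∀ l m, resNat (inf_le_right : U l ⊓ U m ≤ U m) (v m) =
      resNat (inf_le_left : U l ⊓ U m ≤ U l) (v l)) (V : Opens X) :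
    ∃ w : F.obj (op V) ⟶ G.obj (op V), ∀ l W (hWV : W ≤ V) (hWl : W ≤ U l),
      w ≫ G.map (homOfLE hWV).op = F.map (homOfLE hWV).op ≫ resXApp (v l) W hWl := by
  obtain ⟨w, hw⟩ := hG.exists_of_le_iSup (fun l => inf_le_left)
    (le_iSup_inf_of_iSup_eq_top hcov V)
    (fun l => F.map (homOfLE inf_le_left).op ≫ resXApp (v l) (V ⊓ U l) inf_le_right)
    fun l m => by
      rw [map_resXApp_map _ _ (inf_le_left.trans inf_le_right),
        map_resXApp_map _ _ (inf_le_right.trans inf_le_right), resXApp_eq_of_resNat_eq hv]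
  -- `w` is glued over the cover `V ⊓ U l`; its restriction to an arbitrary `W ≤ V ⊓ U l` is then
  -- identified over the cover `W ⊓ U m`.
  refine ⟨w, fun l W hWV hWl => ?_⟩
  refine hG.hom_ext_of_le_iSup (fun m => inf_le_left) (le_iSup_inf_of_iSup_eq_top hcov W)
    fun m => ?_
  have hWm : W ⊓ U m ≤ V ⊓ U m := inf_le_inf_right _ hWV
  calc (w ≫ G.map (homOfLE hWV).op) ≫ G.map (homOfLE inf_le_left).op
      = (w ≫ G.map (homOfLE inf_le_left).op) ≫ G.map (homOfLE hWm).op := by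
        simp only [Category.assoc, map_homOfLE_comp_s10]
    _ = F.map (homOfLE (hWm.trans inf_le_left)).op ≫ resXApp (v m) (W ⊓ U m) inf_le_right := by
        rw [hw, map_resXApp_map]
    _ = F.map (homOfLE (hWm.trans inf_le_left)).op ≫
          resXApp (v l) (W ⊓ U m) (inf_le_left.trans hWl) := by
        rw [resXApp_eq_of_resNat_eq hv]
    _ = (F.map (homOfLE hWV).op ≫ resXApp (v l) W hWl) ≫ G.map (homOfLE inf_le_left).op := by
        rw [map_resXApp_map]

theorem exists_resXNat_eq (hcov : ⨆ l, U l = ⊤) (hG : IsSheafF G)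
    (v : ∀ l, resX (U l) F ⟶ resX (U l) G)
    (hv : ∀ l m, resNat (inf_le_right : U l ⊓ U m ≤ U m) (v m) =
      resNat (inf_le_left : U l ⊓ U m ≤ U l) (v l)) :
    ∃ u : F ⟶ G, ∀ l, resXNat (U l) u = v l := by
  choose w hw using exists_resXApp_glue hcov hG v hv
  have hw_app : ∀ l (W : OpensLe (U l)), w W.1 = resXApp (v l) W.1 W.2 := fun l W => by
    simpa only [homOfLE_refl, op_id, CategoryTheory.Functor.map_id, Category.comp_id,
      Category.id_comp] using hw W.1 l W.1 le_rfl W.2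
  refine ⟨⟨fun V => w V.unop, fun {V V'} f => ?_⟩, fun l => ?_⟩
  · obtain ⟨V⟩ := V
    obtain ⟨V'⟩ := V'
    obtain ⟨h, rfl⟩ : ∃ h : V' ≤ V, f = (homOfLE h).op := ⟨f.unop.le, rfl⟩
    refine hG.hom_ext_of_le_iSup (fun l => inf_le_left) (le_iSup_inf_of_iSup_eq_top hcov V')
      fun l => ?_
    rw [Category.assoc, hw V' l _ inf_le_left inf_le_right, map_homOfLE_comp_assoc,
      Category.assoc, map_homOfLE_comp_s10, hw V l _ _ inf_le_right]
  · ext ⟨W⟩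
    exact hw_app l W

theorem existsUnique_resXNat_eq
    (hcov : ⨆ l, U l = ⊤) (hG : IsSheafF G) (v : ∀ l, resX (U l) F ⟶ resX (U l) G)
    (hv : ∀ l m, resNat (inf_le_right : U l ⊓ U m ≤ U m) (v m) =
      resNat (inf_le_left : U l ⊓ U m ≤ U l) (v l)) :
    ∃! u : F ⟶ G, ∀ l, resXNat (U l) u = v l :=
  let ⟨u, hu⟩ := exists_resXNat_eq hcov hG v hv
  ⟨u, hu, fun _ hu' => hom_ext_of_resXNat_eq hcov hG fun l => (hu' l).trans (hu l).symm⟩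

end Glue

theorem hom_glued_bijective_general {X : Type u} [TopologicalSpace X] {K : Type w}
    [Category.{v} K] {L : Type u} (U : L → Opens X)
    (hcov : (⨆ l, U l) = ⊤)
    (F G : ∀ l, (OpensLe (U l))ᵒᵖ ⥤ K)
    (θ : ∀ l m, resF (inf_le_right : U l ⊓ U m ≤ U m) (F m) ≅
                resF (inf_le_left : U l ⊓ U m ≤ U l) (F l))
    (ω : ∀ l m, resF (inf_le_right : U l ⊓ U m ≤ U m) (G m) ≅
                resF (inf_le_left : U l ⊓ U m ≤ U l) (G l))
    (FF GG : (Opens X)ᵒᵖ ⥤ K) (hGG : IsSheafF GG)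
    (η : ∀ l, resX (U l) FF ≅ F l) (ζ : ∀ l, resX (U l) GG ≅ G l)
    (hη : ∀ l m, θ l m =
      (resIso (inf_le_right : U l ⊓ U m ≤ U m) (η m)).symm ≪≫
        resIso (inf_le_left : U l ⊓ U m ≤ U l) (η l))
    (hζ : ∀ l m, ω l m =
      (resIso (inf_le_right : U l ⊓ U m ≤ U m) (ζ m)).symm ≪≫
        resIso (inf_le_left : U l ⊓ U m ≤ U l) (ζ l)) :
    (∀ u : FF ⟶ GG, ∀ l m,
      resNat (inf_le_right : U l ⊓ U m ≤ U m)
          ((η m).inv ≫ resXNat (U m) u ≫ (ζ m).hom) ≫ (ω l m).hom =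
        (θ l m).hom ≫
          resNat (inf_le_left : U l ⊓ U m ≤ U l)
            ((η l).inv ≫ resXNat (U l) u ≫ (ζ l).hom)) ∧
    (∀ uα : ∀ l, F l ⟶ G l,
      (∀ l m, resNat (inf_le_right : U l ⊓ U m ≤ U m) (uα m) ≫ (ω l m).hom =
        (θ l m).hom ≫ resNat (inf_le_left : U l ⊓ U m ≤ U l) (uα l)) →
      ∃! u : FF ⟶ GG, ∀ l, (η l).inv ≫ resXNat (U l) u ≫ (ζ l).hom = uα l) := by
  have compat_iff : ∀ l m (t : ∀ l, resX (U l) FF ⟶ resX (U l) GG),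
      resNat inf_le_right ((η m).inv ≫ t m ≫ (ζ m).hom) ≫ (ω l m).hom =
          (θ l m).hom ≫ resNat inf_le_left ((η l).inv ≫ t l ≫ (ζ l).hom) ↔
        resNat inf_le_right (t m) = resNat inf_le_left (t l) := fun l m t => by
    rw [hη, hζ]
    have hl : U l ⊓ U m ≤ U l := inf_le_left
    have hm : U l ⊓ U m ≤ U m := inf_le_right
    exact Iso.conj_comp_symm_trans_iff (resIso hl (η l)) (resIso hm (η m)) (resIso hl (ζ l))
      (resIso hm (ζ m)) (resNat hl (t l)) (resNat hm (t m))
  refine ⟨fun u l m => (compat_iff l m fun l => resXNat (U l) u).2 rfl, fun uα huα => ?_⟩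
  set v := fun l => (η l).hom ≫ uα l ≫ (ζ l).inv
  have huα_eq : ∀ l, uα l = (η l).inv ≫ v l ≫ (ζ l).hom := fun l => by simp [v]
  have hv := fun l m => (compat_iff l m v).1 (by rw [← huα_eq, ← huα_eq]; exact huα l m)
  have hconj : ∀ l (x : resX (U l) FF ⟶ resX (U l) GG),
      (η l).inv ≫ x ≫ (ζ l).hom = uα l ↔ x = v l := fun l x => by
    rw [huα_eq, Iso.cancel_iso_inv_left, cancel_mono]
  simpa only [hconj] using existsUnique_resXNat_eq hcov hGG v hv

/-- Morphisms between glued sheaves correspond bijectively to families of morphisms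
between the local sheaves commuting with the gluing isomorphisms. -/
theorem hom_glued_bijective {X : Type u} [TopologicalSpace X] {K : Type w}
    [Category.{v} K] [HasLimitsOfSize.{u, u} K] {L : Type u} (U : L → Opens X)
    (hcov : (⨆ l, U l) = ⊤)
    (F G : ∀ l, (OpensLe (U l))ᵒᵖ ⥤ K)
    (hF : ∀ l, IsSheafLe (F l)) (hG : ∀ l, IsSheafLe (G l))
    (θ : ∀ l m, resF (inf_le_right : U l ⊓ U m ≤ U m) (F m) ≅
                resF (inf_le_left : U l ⊓ U m ≤ U l) (F l))
    (ω : ∀ l m, resF (inf_le_right : U l ⊓ U m ≤ U m) (G m) ≅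
                resF (inf_le_left : U l ⊓ U m ≤ U l) (G l))
    (FF GG : (Opens X)ᵒᵖ ⥤ K) (hFF : IsSheafF FF) (hGG : IsSheafF GG)
    (η : ∀ l, resX (U l) FF ≅ F l) (ζ : ∀ l, resX (U l) GG ≅ G l)
    (hη : ∀ l m, θ l m =
      (resIso (inf_le_right : U l ⊓ U m ≤ U m) (η m)).symm ≪≫
        resIso (inf_le_left : U l ⊓ U m ≤ U l) (η l))
    (hζ : ∀ l m, ω l m =
      (resIso (inf_le_right : U l ⊓ U m ≤ U m) (ζ m)).symm ≪≫
        resIso (inf_le_left : U l ⊓ U m ≤ U l) (ζ l)) :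
    (∀ u : FF ⟶ GG, ∀ l m,
      resNat (inf_le_right : U l ⊓ U m ≤ U m)
          ((η m).inv ≫ resXNat (U m) u ≫ (ζ m).hom) ≫ (ω l m).hom =
        (θ l m).hom ≫
          resNat (inf_le_left : U l ⊓ U m ≤ U l)
            ((η l).inv ≫ resXNat (U l) u ≫ (ζ l).hom)) ∧
    (∀ uα : ∀ l, F l ⟶ G l,
      (∀ l m, resNat (inf_le_right : U l ⊓ U m ≤ U m) (uα m) ≫ (ω l m).hom =
        (θ l m).hom ≫ resNat (inf_le_left : U l ⊓ U m ≤ U l) (uα l)) →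
      ∃! u : FF ⟶ GG, ∀ l, (η l).inv ≫ resXNat (U l) u ≫ (ζ l).hom = uα l) :=
  hom_glued_bijective_general U hcov F G θ ω FF GG hGG η ζ hη hζ
end

section
/- Let X be an irreducible topological space and F a sheaf on X with values in a category K which is locally simple: every point of X has an open neighborhood U such that F|_U is (isomorphic to) a constant sheaf on U. Then F itself is constant, i.e., the restriction F(X) → F(U) is an isomorphism for every nonempty open U ⊆ X. -/
open CategoryTheory CategoryTheory.Limits TopologicalSpace Opposite
universe u v w

def res {X : Type u} [TopologicalSpace X] {K : Type w} [Category.{v} K]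
    (F : (Opens X)ᵒᵖ ⥤ K) {A B : Opens X} (h : A ≤ B) :
    F.obj (op B) ⟶ F.obj (op A) := F.map (homOfLE h).op

lemma res_def {X : Type u} [TopologicalSpace X] {K : Type w} [Category.{v} K]
    (F : (Opens X)ᵒᵖ ⥤ K) {A B : Opens X} (h : A ≤ B) :
    F.map (homOfLE h).op = res F h := rfl

lemma res_comp {X : Type u} [TopologicalSpace X] {K : Type w} [Category.{v} K]
    (F : (Opens X)ᵒᵖ ⥤ K) {A B C : Opens X} (hAB : A ≤ B) (hBC : B ≤ C) :
    res F hBC ≫ res F hAB = res F (hAB.trans hBC) := by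
  simp only [res, ← F.map_comp]; rfl

lemma res_id {X : Type u} [TopologicalSpace X] {K : Type w} [Category.{v} K]
    (F : (Opens X)ᵒᵖ ⥤ K) {A : Opens X} (h : A ≤ A) : res F h = 𝟙 _ := by
  have : (homOfLE h).op = 𝟙 (op A) := rfl
  rw [res, this, F.map_id]

/-- On an irreducible space, a locally simple (locally constant) sheaf is constant. -/
theorem constant_of_locally_simple_of_irreducible {X : Type u} [TopologicalSpace X]
    [IrreducibleSpace X] {K : Type w} [Category.{v} K] (F : (Opens X)ᵒᵖ ⥤ K)
    (hF : IsSheafF F)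
    (hloc : ∀ x : X, ∃ U : Opens X, x ∈ U ∧
      ∀ (W : Opens X) (hWU : W ≤ U), W ≠ ⊥ → IsIso (F.map (homOfLE hWU).op)) :
    ∀ U : Opens X, U ≠ ⊥ → IsIso (F.map (homOfLE (le_top : U ≤ ⊤)).op) := by
  classical
  choose Ux hmem hiso using hloc
  have hint : ∀ V W : Opens X, V ≠ ⊥ → W ≠ ⊥ → V ⊓ W ≠ ⊥ := by
    intro V W hV hW
    rw [Opens.ne_bot_iff_nonempty] at hV hW ⊢
    exact nonempty_preirreducible_inter V.isOpen W.isOpen hV hW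
  have hUxne : ∀ x, Ux x ≠ ⊥ := fun x =>
    (Opens.ne_bot_iff_nonempty _).mpr ⟨x, hmem x⟩
  have hiso2 : ∀ (x : X) {W W' : Opens X} (h : W ≤ W') (h' : W' ≤ Ux x),
      W ≠ ⊥ → IsIso (res F h) := by
    intro x W W' h h' hW
    have hW' : W' ≠ ⊥ := fun hb => hW (le_bot_iff.mp (hb ▸ h))
    have i1 : IsIso (res F (h.trans h')) := hiso x W (h.trans h') hW
    haveI i2 : IsIso (res F h') := hiso x W' h' hW'
    haveI : IsIso (res F h' ≫ res F h) := by rw [res_comp]; exact i1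
    exact IsIso.of_isIso_comp_left (res F h') (res F h)
  intro U hU
  have hVne : ∀ x, U ⊓ Ux x ≠ ⊥ := fun x => hint U (Ux x) hU (hUxne x)
  have hsupT : (⨆ x, Ux x) = ⊤ := by
    apply le_antisymm le_top
    intro x _
    exact Opens.mem_iSup.mpr ⟨x, hmem x⟩
  have hsupU : (⨆ x, U ⊓ Ux x) = U := by
    apply le_antisymm (iSup_le fun _ => inf_le_left)
    intro x hx
    exact Opens.mem_iSup.mpr ⟨x, hx, hmem x⟩
  have iVU : ∀ x, IsIso (res F (inf_le_right : U ⊓ Ux x ≤ Ux x)) :=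
    fun x => hiso2 x inf_le_right le_rfl (hVne x)
  obtain ⟨fα, hfα⟩ : ∃ fα : ∀ x, F.obj (op U) ⟶ F.obj (op (Ux x)),
      ∀ x, fα x = res F (inf_le_left : U ⊓ Ux x ≤ U) ≫
        @inv _ _ _ _ (res F (inf_le_right : U ⊓ Ux x ≤ Ux x)) (iVU x) :=
    ⟨_, fun _ => rfl⟩
  -- fα composed with a restriction, landing inside U ⊓ Ux x
  have key : ∀ (x : X) {W : Opens X} (h1 : W ≤ U ⊓ Ux x) (h2 : W ≤ Ux x) (h3 : W ≤ U),
      fα x ≫ res F h2 = res F h3 := by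
    intro x W h1 h2 h3
    haveI := iVU x
    have e1 : res F h2 = res F (inf_le_right : U ⊓ Ux x ≤ Ux x) ≫ res F h1 := by
      rw [res_comp]
    rw [hfα x, e1, Category.assoc, IsIso.inv_hom_id_assoc, res_comp]
  -- fα precomposed with a restriction from A ⊇ U
  have key2 : ∀ (x : X) {A : Opens X} (hA : U ≤ A) (h2 : Ux x ≤ A),
      res F hA ≫ fα x = res F h2 := by
    intro x A hA h2
    haveI := iVU x
    rw [hfα x, ← Category.assoc, res_comp]
    have e : res F ((inf_le_left : U ⊓ Ux x ≤ U).trans hA) =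
        res F h2 ≫ res F (inf_le_right : U ⊓ Ux x ≤ Ux x) := by rw [res_comp]
    rw [e, Category.assoc, IsIso.hom_inv_id, Category.comp_id]
  have hcompat : ∀ x y, fα x ≫ F.map (homOfLE (inf_le_left : Ux x ⊓ Ux y ≤ Ux x)).op =
      fα y ≫ F.map (homOfLE (inf_le_right : Ux x ⊓ Ux y ≤ Ux y)).op := by
    intro x y
    have hWne : U ⊓ (Ux x ⊓ Ux y) ≠ ⊥ := hint U _ hU (hint _ _ (hUxne x) (hUxne y))
    have hWxy : U ⊓ (Ux x ⊓ Ux y) ≤ Ux x ⊓ Ux y := inf_le_right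
    haveI : IsIso (res F hWxy) := hiso2 x hWxy inf_le_left hWne
    rw [← cancel_mono (res F hWxy)]
    calc (fα x ≫ F.map (homOfLE (inf_le_left : Ux x ⊓ Ux y ≤ Ux x)).op) ≫ res F hWxy
        = fα x ≫ res F (hWxy.trans inf_le_left) := by
          rw [Category.assoc (fα x), res_def, res_comp]
      _ = res F (inf_le_left : U ⊓ (Ux x ⊓ Ux y) ≤ U) :=
          key x (le_inf inf_le_left (hWxy.trans inf_le_left)) _ _
      _ = fα y ≫ res F (hWxy.trans inf_le_right) :=
          (key y (le_inf inf_le_left (hWxy.trans inf_le_right)) _ _).symm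
      _ = (fα y ≫ F.map (homOfLE (inf_le_right : Ux x ⊓ Ux y ≤ Ux y)).op) ≫ res F hWxy := by
          rw [Category.assoc (fα y), res_def, res_comp]
  obtain ⟨f, hf⟩ := (hF Ux (F.obj (op U))).2 fα hcompat
  simp only [res_def] at hf
  obtain ⟨g, hg⟩ : ∃ g : F.obj (op U) ⟶ F.obj (op ⊤), g = f ≫ res F hsupT.ge :=
    ⟨_, rfl⟩
  have hgx : ∀ x, g ≫ res F (le_top : Ux x ≤ ⊤) = fα x := by
    intro x
    rw [hg, Category.assoc, res_comp]
    exact hf x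
  have eq1 : res F (le_top : U ≤ ⊤) ≫ g = 𝟙 _ := by
    have hf' : res F (le_top : U ≤ ⊤) ≫ f = res F hsupT.le := by
      apply (hF Ux (F.obj (op ⊤))).1
      intro x
      simp only [res_def]
      rw [Category.assoc, hf x, key2 x le_top ((le_iSup Ux x).trans hsupT.le), res_comp]
    rw [hg, ← Category.assoc, hf', res_comp, res_id]
  have eq2 : g ≫ res F (le_top : U ≤ ⊤) = 𝟙 _ := by
    haveI hiso3 : IsIso (res F hsupU.le) :=
      ⟨res F hsupU.ge, by rw [res_comp, res_id], by rw [res_comp, res_id]⟩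
    rw [← cancel_mono (res F hsupU.le)]
    apply (hF (fun x => U ⊓ Ux x) (F.obj (op U))).1
    intro x
    calc ((g ≫ res F (le_top : U ≤ ⊤)) ≫ res F hsupU.le) ≫
          F.map (homOfLE (le_iSup (fun x => U ⊓ Ux x) x)).op
        = g ≫ res F (le_top : U ≤ ⊤) ≫
            res F ((le_iSup (fun x => U ⊓ Ux x) x).trans hsupU.le) := by
          rw [res_def, Category.assoc, Category.assoc, res_comp, res_comp]
      _ = g ≫ res F (le_top : Ux x ≤ ⊤) ≫ res F (inf_le_right : U ⊓ Ux x ≤ Ux x) := by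
          rw [res_comp, res_comp]
      _ = fα x ≫ res F (inf_le_right : U ⊓ Ux x ≤ Ux x) := by
          rw [← Category.assoc, hgx x]
      _ = res F (inf_le_left : U ⊓ Ux x ≤ U) := key x le_rfl _ _
      _ = (𝟙 (F.obj (op U)) ≫ res F hsupU.le) ≫
            F.map (homOfLE (le_iSup (fun x => U ⊓ Ux x) x)).op := by
          rw [res_def, Category.id_comp, res_comp]
  rw [res_def]
  exact ⟨g, eq1, eq2⟩
end
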